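/- arXiv:1409.5937 — 2 statements merged into one kernel-verified Lean document; each statement's English description precedes it below -/
import Mathlib

section
/- Robustness of the geometric median: Let H be a real Hilbert space, let θ_1, …, θ_k ∈ H, let θ* ∈ H, let r ≥ 0, and fix γ ∈ (0, 1/2). Suppose there exists a subset J ⊆ {1, …, k} of cardinality |J| > (1 − γ)·k such that ‖θ_j − θ*‖ ≤ r for all j ∈ J. Then every geometric median θ̃ of θ_1, …, θ_k satisfies ‖θ̃ − θ*‖ ≤ C_γ · r. -/
open scoped BigOperators

/-- A point `m` is a geometric median of the points `θ 1, …, θ k` if it minimizes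
`y ↦ ∑ j, ‖y - θ j‖`. -/
def IsGeomMedian {H : Type*} [NormedAddCommGroup H] {k : ℕ} (θ : Fin k → H) (m : H) : Prop :=
  ∀ y : H, ∑ j, ‖m - θ j‖ ≤ ∑ j, ‖y - θ j‖

/-- The constant `C_γ = (1 - γ) √(1/(1 - 2γ))`. -/
noncomputable def Cconst (γ : ℝ) : ℝ := (1 - γ) * Real.sqrt (1 / (1 - 2 * γ))

/-!
Let `m` be a geometric median, `R = ‖m - θ*‖ > r`, and move `m` towards `θ*`. Seen from `m`,
every good point `θ j` (`j ∈ J`) lies in the ball of radius `r` around `θ*`, hence in a cone of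
half-angle `arcsin (r / R)` around the direction of `θ*`; so its distance to `m` decreases at
rate at least `√(R² - r²) / R`, while each of the other points can increase the objective at rate
at most `1`. Minimality of `m` forces `|J| √(R² - r²) ≤ |Jᶜ| R`, and `|Jᶜ| < γ k < γ |J| / (1 - γ)`
turns this into `R ≤ C_γ r`.
-/

open Finset Filter Topology
open scoped RealInnerProductSpace

section InnerProductSpace

variable {H : Type*} [NormedAddCommGroup H] [InnerProductSpace ℝ H]

theorem norm_add_le_norm_add_inner_div_norm {x : H} (hx : x ≠ 0) (y : H) :
    ‖x + y‖ ≤ ‖x‖ + ⟪x, y⟫ / ‖x‖ + ‖y‖ ^ 2 / (2 * ‖x‖) := by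
  have hx' : 0 < ‖x‖ := norm_pos_iff.mpr hx
  have hsq : 2 * ‖x‖ * ‖x + y‖ ≤ 2 * ‖x‖ ^ 2 + 2 * ⟪x, y⟫ + ‖y‖ ^ 2 := by
    nlinarith [norm_add_sq_real x y, two_mul_le_add_sq ‖x‖ ‖x + y‖]
  calc ‖x + y‖ ≤ (2 * ‖x‖ ^ 2 + 2 * ⟪x, y⟫ + ‖y‖ ^ 2) / (2 * ‖x‖) := by
        rw [le_div_iff₀ (by positivity)]; linarith
    _ = ‖x‖ + ⟪x, y⟫ / ‖x‖ + ‖y‖ ^ 2 / (2 * ‖x‖) := by field_simp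

theorem inner_sub_le_neg_norm_mul_sqrt {x p c : H} {r : ℝ} (hp : ‖p - c‖ ≤ r)
    (hr : r ≤ ‖x - c‖) :
    ⟪x - p, c - x⟫ ≤ -(‖x - p‖ * √(‖x - c‖ ^ 2 - r ^ 2)) := by
  have hD : 0 ≤ ‖x - c‖ ^ 2 - r ^ 2 := by nlinarith [norm_nonneg (p - c)]
  have hpolar : ‖p - c‖ ^ 2 = ‖x - c‖ ^ 2 + 2 * ⟪x - p, c - x⟫ + ‖x - p‖ ^ 2 := by
    rw [← sub_sub_sub_cancel_left c p x, norm_sub_sq_real, ← neg_sub x c, inner_neg_right,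
      real_inner_comm]
    ring
  nlinarith [two_mul_le_add_sq ‖x - p‖ √(‖x - c‖ ^ 2 - r ^ 2), Real.sq_sqrt hD,
    norm_nonneg (p - c)]

theorem nonneg_of_forall_pos_nonneg_add_mul {A K : ℝ} (h : ∀ t > 0, 0 ≤ A + t * K) : 0 ≤ A := by
  have hlim : Tendsto (fun t : ℝ => A + t * K) (𝓝[>] 0) (𝓝 A) := by
    apply tendsto_nhdsWithin_of_tendsto_nhds
    simpa using (tendsto_const_nhds (x := A)).add ((tendsto_id (x := 𝓝 (0 : ℝ))).mul_const K)
  exact ge_of_tendsto hlim (eventually_nhdsWithin_of_forall h)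

variable {k : ℕ} {θ : Fin k → H} {m : H}

theorem IsGeomMedian.neg_sum_inner_div_norm_le (hm : IsGeomMedian θ m) {S : Finset (Fin k)}
    (hS : ∀ j ∈ S, θ j ≠ m) (v : H) :
    -∑ j ∈ S, ⟪m - θ j, v⟫ / ‖m - θ j‖ ≤ Sᶜ.card * ‖v‖ := by
  set A := ∑ j ∈ S, ⟪m - θ j, v⟫ / ‖m - θ j‖ + Sᶜ.card * ‖v‖
  set K := ∑ j ∈ S, ‖v‖ ^ 2 / (2 * ‖m - θ j‖)
  suffices ∀ t > 0, 0 ≤ A + t * K by linarith [nonneg_of_forall_pos_nonneg_add_mul this]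
  intro t ht
  have hS' : ∀ j ∈ S, ‖m + t • v - θ j‖ ≤
      ‖m - θ j‖ + t * (⟪m - θ j, v⟫ / ‖m - θ j‖) + t ^ 2 * (‖v‖ ^ 2 / (2 * ‖m - θ j‖)) := by
    intro j hj
    have := norm_add_le_norm_add_inner_div_norm (sub_ne_zero.mpr (hS j hj).symm) (t • v)
    rw [inner_smul_right, norm_smul, Real.norm_of_nonneg ht.le, sub_add_eq_add_sub] at this
    convert this using 2 <;> ring
  have hSc : ∀ j ∈ Sᶜ, ‖m + t • v - θ j‖ ≤ ‖m - θ j‖ + t * ‖v‖ := by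
    intro j _
    rw [← norm_smul_of_nonneg ht.le, ← sub_add_eq_add_sub]
    exact norm_add_le _ _
  have hmin := calc ∑ j, ‖m - θ j‖
      ≤ ∑ j, ‖m + t • v - θ j‖ := hm _
    _ = ∑ j ∈ S, ‖m + t • v - θ j‖ + ∑ j ∈ Sᶜ, ‖m + t • v - θ j‖ := (sum_add_sum_compl S _).symm
    _ ≤ ∑ j ∈ S, (‖m - θ j‖ + t * (⟪m - θ j, v⟫ / ‖m - θ j‖)
          + t ^ 2 * (‖v‖ ^ 2 / (2 * ‖m - θ j‖))) + ∑ j ∈ Sᶜ, (‖m - θ j‖ + t * ‖v‖) :=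
        add_le_add (sum_le_sum hS') (sum_le_sum hSc)
    _ = ∑ j, ‖m - θ j‖ + t * (A + t * K) := by
        rw [← sum_add_sum_compl S fun j => ‖m - θ j‖]
        simp only [A, K, sum_add_distrib, ← mul_sum, sum_const, nsmul_eq_mul]
        ring
  nlinarith

theorem IsGeomMedian.card_mul_sqrt_le (hm : IsGeomMedian θ m) {J : Finset (Fin k)} {c : H}
    {r : ℝ} (hJ : ∀ j ∈ J, ‖θ j - c‖ ≤ r) :
    J.card * √(‖m - c‖ ^ 2 - r ^ 2) ≤ Jᶜ.card * ‖m - c‖ := by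
  rcases le_or_gt ‖m - c‖ r with hle | hlt
  · rw [Real.sqrt_eq_zero'.mpr (by nlinarith [norm_nonneg (m - c)]), mul_zero]
    positivity
  have hne : ∀ j ∈ J, θ j ≠ m := fun j hj h => by
    have := hJ j hj
    rw [h] at this
    linarith
  have hterm : ∀ j ∈ J, ⟪m - θ j, c - m⟫ / ‖m - θ j‖ ≤ -√(‖m - c‖ ^ 2 - r ^ 2) := by
    intro j hj
    rw [div_le_iff₀ (norm_pos_iff.mpr (sub_ne_zero.mpr (hne j hj).symm))]
    linarith [inner_sub_le_neg_norm_mul_sqrt (hJ j hj) hlt.le]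
  have hsum := sum_le_sum hterm
  rw [sum_const, nsmul_eq_mul] at hsum
  have hopt := hm.neg_sum_inner_div_norm_le hne (c - m)
  rw [norm_sub_rev] at hopt
  linarith

end InnerProductSpace

theorem le_Cconst_mul {γ r R : ℝ} (hγ : γ < 1 / 2) (hr : 0 ≤ r)
    (h : (1 - γ) * √(R ^ 2 - r ^ 2) ≤ γ * R) : R ≤ Cconst γ * r := by
  have h2γ : 0 < 1 - 2 * γ := by linarith
  have hsq : (1 - 2 * γ) * R ^ 2 ≤ (1 - γ) ^ 2 * r ^ 2 := by
    rcases le_or_gt (R ^ 2) (r ^ 2) with hle | hlt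
    · nlinarith [sq_nonneg γ]
    · have hs := Real.sq_sqrt (sub_nonneg.mpr hlt.le)
      have := pow_le_pow_left₀ (by nlinarith [Real.sqrt_nonneg (R ^ 2 - r ^ 2)]) h 2
      nlinarith
  have hC : (Cconst γ * r) ^ 2 = (1 - γ) ^ 2 * r ^ 2 / (1 - 2 * γ) := by
    rw [Cconst, mul_pow, mul_pow, Real.sq_sqrt (by positivity)]
    ring
  refine (le_abs_self R).trans (abs_le_of_sq_le_sq ?_ ?_)
  · rw [hC, le_div_iff₀ h2γ]; linarith
  · unfold Cconst
    have : 0 ≤ 1 - γ := by linarith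
    positivity

theorem geomMedian_robust_general {H : Type*} [NormedAddCommGroup H] [InnerProductSpace ℝ H]
    {k : ℕ} (θ : Fin k → H) (θstar : H) (r : ℝ) (hr : 0 ≤ r)
    (γ : ℝ) (hγ : γ ∈ Set.Ioo (0 : ℝ) (1 / 2))
    (J : Finset (Fin k)) (hJcard : (1 - γ) * k < J.card)
    (hJ : ∀ j ∈ J, ‖θ j - θstar‖ ≤ r)
    (θtilde : H) (hmed : IsGeomMedian θ θtilde) :
    ‖θtilde - θstar‖ ≤ Cconst γ * r := by
  apply le_Cconst_mul hγ.2 hr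
  set R := ‖θtilde - θstar‖
  set s := √(R ^ 2 - r ^ 2)
  have hcore : J.card * s ≤ Jᶜ.card * R := hmed.card_mul_sqrt_le hJ
  have hcompl : (Jᶜ.card : ℝ) = k - J.card := by
    rw [card_compl, Fintype.card_fin, Nat.cast_sub (card_le_univ J |>.trans_eq (Fintype.card_fin k))]
  have hk : 0 < (k : ℝ) := by
    have : (J.card : ℝ) ≤ k := by exact_mod_cast (card_le_univ J).trans_eq (Fintype.card_fin k)
    nlinarith [hγ.2]
  have hs : 0 ≤ s := Real.sqrt_nonneg _
  have hR : 0 ≤ R := norm_nonneg _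
  have : k * ((1 - γ) * s) ≤ k * (γ * R) := by nlinarith
  exact le_of_mul_le_mul_left this hk

/-- **Robustness of the geometric median.** If more than `(1 - γ) k` of the points
`θ 1, …, θ k` lie within distance `r` of `θ*`, then every geometric median of the points lies
within distance `C_γ · r` of `θ*`. -/
theorem geomMedian_robust {H : Type*} [NormedAddCommGroup H] [InnerProductSpace ℝ H]
    [CompleteSpace H] {k : ℕ} (θ : Fin k → H) (θstar : H) (r : ℝ) (hr : 0 ≤ r)
    (γ : ℝ) (hγ : γ ∈ Set.Ioo (0 : ℝ) (1 / 2))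
    (J : Finset (Fin k)) (hJcard : (1 - γ) * k < J.card)
    (hJ : ∀ j ∈ J, ‖θ j - θstar‖ ≤ r)
    (θtilde : H) (hmed : IsGeomMedian θ θtilde) :
    ‖θtilde - θstar‖ ≤ Cconst γ * r :=
  geomMedian_robust_general θ θstar r hr γ hγ J hJcard hJ θtilde hmed
end

section
/- Tolerance of DRL to machine breakdown: Let H be a real Hilbert space, θ* ∈ H, r ≥ 0, and ε ∈ (0, 1/2). Let θ_1, …, θ_k ∈ H and suppose that at least (1/2 + ε)·k of the points satisfy ‖θ_j − θ*‖ ≤ r, while the remaining points (e.g., outputs of broken machines) are arbitrary. Then every geometric median θ̃ of θ_1, …, θ_k satisfies ‖θ̃ − θ*‖ ≤ C_{1/2 − ε} · r, where C_{1/2 − ε} = (1/2 + ε)/√(2ε). -/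
/-!
Let `d = ‖θ̃ - θ*‖ > r`. Seen from `θ̃`, every good point lies within angle `arcsin (r / d)` of
the direction `θ* - θ̃`, so moving `θ̃` slightly towards `θ*` shrinks each of the `#J` good
distances at rate at least `√(d² - r²) / d`, while every other distance grows at rate at most `1`.
Minimality of `θ̃` therefore forces `#J √(d² - r²) ≤ (k - #J) d`, and `#J ≥ (1/2 + ε) k` turns this
into `2ε d² ≤ (1/2 + ε)² r²`.
-/

open scoped BigOperators

section

open Finset Filter Topology RealInnerProductSpace

variable {H : Type*} [NormedAddCommGroup H] [InnerProductSpace ℝ H]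

/-- The norm lies below its tangent paraboloid at any nonzero point. -/
theorem norm_add_le_of_ne_zero {a : H} (ha : a ≠ 0) (b : H) :
    ‖a + b‖ ≤ ‖a‖ + ⟪a, b⟫ / ‖a‖ + ‖b‖ ^ 2 / (2 * ‖a‖) := by
  have ha' : 0 < ‖a‖ := norm_pos_iff.mpr ha
  have hexp := norm_add_sq_real a b
  rw [← sub_nonneg]
  have hrw : ‖a‖ + ⟪a, b⟫ / ‖a‖ + ‖b‖ ^ 2 / (2 * ‖a‖) - ‖a + b‖
      = (‖a + b‖ - ‖a‖) ^ 2 / (2 * ‖a‖) := by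
    field_simp
    linear_combination (-1 : ℝ) * hexp
  rw [hrw]
  positivity

/-- If `‖v - w‖ ≤ r ≤ ‖w‖`, the angle between `v` and `w` is at most `arcsin (r / ‖w‖)`. -/
theorem sqrt_sq_sub_sq_mul_norm_le_inner {v w : H} {r : ℝ} (hvw : ‖v - w‖ ≤ r)
    (hrw : r ≤ ‖w‖) : √(‖w‖ ^ 2 - r ^ 2) * ‖v‖ ≤ ⟪v, w⟫ := by
  have hr : 0 ≤ r := (norm_nonneg _).trans hvw
  have hs : √(‖w‖ ^ 2 - r ^ 2) ^ 2 = ‖w‖ ^ 2 - r ^ 2 :=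
    Real.sq_sqrt (by nlinarith)
  have hexp := norm_sub_sq_real v w
  nlinarith [sq_nonneg (√(‖w‖ ^ 2 - r ^ 2) - ‖v‖), pow_le_pow_left₀ (norm_nonneg _) hvw 2]

variable {k : ℕ} {θ : Fin k → H} {m : H}

/-- First-order optimality along `u`: the right derivative at `m` of `y ↦ ‖y - θ j‖` in direction
`u` is `⟪m - θ j, u⟫ / ‖m - θ j‖` for `j ∈ J` and at most `‖u‖` otherwise. -/
theorem IsGeomMedian.sum_inner_div_norm_add_card_compl_mul_nonneg (hm : IsGeomMedian θ m)
    {J : Finset (Fin k)} (hJ : ∀ j ∈ J, θ j ≠ m) (u : H) :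
    0 ≤ ∑ j ∈ J, ⟪m - θ j, u⟫ / ‖m - θ j‖ + #Jᶜ * ‖u‖ := by
  set D := ∑ j ∈ J, ⟪m - θ j, u⟫ / ‖m - θ j‖ + #Jᶜ * ‖u‖
  set K := ∑ j ∈ J, ‖u‖ ^ 2 / (2 * ‖m - θ j‖)
  have hstep : ∀ t > 0, ∑ j, ‖m + t • u - θ j‖ ≤ ∑ j, ‖m - θ j‖ + t * D + t ^ 2 * K := by
    intro t ht
    have hgood : ∀ j ∈ J, ‖m + t • u - θ j‖ ≤ ‖m - θ j‖
        + t * (⟪m - θ j, u⟫ / ‖m - θ j‖) + t ^ 2 * (‖u‖ ^ 2 / (2 * ‖m - θ j‖)) := by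
      intro j hj
      have h := norm_add_le_of_ne_zero (sub_ne_zero.mpr (hJ j hj).symm) (t • u)
      rw [sub_add_eq_add_sub] at h
      simpa only [inner_smul_right, norm_smul, Real.norm_of_nonneg ht.le, mul_pow, mul_div_assoc]
        using h
    have hbad : ∀ j ∈ Jᶜ, ‖m + t • u - θ j‖ ≤ ‖m - θ j‖ + t * ‖u‖ := fun j _ => by
      simpa [add_sub_right_comm, norm_smul, abs_of_pos ht] using
        norm_add_le (m - θ j) (t • u)
    calc ∑ j, ‖m + t • u - θ j‖
        = ∑ j ∈ J, ‖m + t • u - θ j‖ + ∑ j ∈ Jᶜ, ‖m + t • u - θ j‖ :=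
          (sum_add_sum_compl J _).symm
      _ ≤ ∑ j ∈ J, (‖m - θ j‖ + t * (⟪m - θ j, u⟫ / ‖m - θ j‖)
            + t ^ 2 * (‖u‖ ^ 2 / (2 * ‖m - θ j‖))) + ∑ j ∈ Jᶜ, (‖m - θ j‖ + t * ‖u‖) :=
          add_le_add (sum_le_sum hgood) (sum_le_sum hbad)
      _ = ∑ j, ‖m - θ j‖ + t * D + t ^ 2 * K := by
          simp only [sum_add_distrib, ← mul_sum, sum_const, nsmul_eq_mul, D, K]
          rw [← sum_add_sum_compl J fun j => ‖m - θ j‖]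
          ring
  have hslope : ∀ t > 0, 0 ≤ D + t * K := fun t ht => by
    have h := (hm (m + t • u)).trans (hstep t ht)
    nlinarith
  have hlim : Tendsto (fun t => D + t * K) (𝓝[>] 0) (𝓝 D) := by
    refine ((continuous_const.add (continuous_id.mul continuous_const)).tendsto' 0 D ?_).mono_left
      nhdsWithin_le_nhds
    simp [D]
  exact ge_of_tendsto hlim (eventually_nhdsWithin_of_forall hslope)

theorem IsGeomMedian.card_mul_sqrt_sq_sub_sq_le (hm : IsGeomMedian θ m) {c : H} {r : ℝ}
    {J : Finset (Fin k)} (hJ : ∀ j ∈ J, ‖θ j - c‖ ≤ r) (hr : r < ‖m - c‖) :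
    #J * √(‖m - c‖ ^ 2 - r ^ 2) ≤ #Jᶜ * ‖m - c‖ := by
  have hne : ∀ j ∈ J, θ j ≠ m := fun j hj h => by
    have := hJ j hj
    rw [h] at this
    linarith
  have hangle : ∀ j ∈ J, √(‖m - c‖ ^ 2 - r ^ 2) ≤ ⟪m - θ j, m - c⟫ / ‖m - θ j‖ := by
    intro j hj
    rw [le_div_iff₀ (norm_pos_iff.mpr (sub_ne_zero.mpr (hne j hj).symm))]
    refine sqrt_sq_sub_sq_mul_norm_le_inner ?_ hr.le
    rw [sub_sub_sub_cancel_left, norm_sub_rev]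
    exact hJ j hj
  have hopt := hm.sum_inner_div_norm_add_card_compl_mul_nonneg hne (c - m)
  simp only [← neg_sub m c, inner_neg_right, neg_div, sum_neg_distrib, norm_neg] at hopt
  calc (#J : ℝ) * √(‖m - c‖ ^ 2 - r ^ 2) = ∑ j ∈ J, √(‖m - c‖ ^ 2 - r ^ 2) := by
        rw [sum_const, nsmul_eq_mul]
    _ ≤ ∑ j ∈ J, ⟪m - θ j, m - c⟫ / ‖m - θ j‖ := sum_le_sum hangle
    _ ≤ #Jᶜ * ‖m - c‖ := by linarith

end

theorem le_div_sqrt_mul_of_mul_sqrt_sq_sub_sq_le {ε d r : ℝ} (hε : 0 < ε) (hr : 0 ≤ r)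
    (hrd : r ≤ d) (h : (1 / 2 + ε) * √(d ^ 2 - r ^ 2) ≤ (1 / 2 - ε) * d) :
    d ≤ (1 / 2 + ε) / √(2 * ε) * r := by
  have hs : √(d ^ 2 - r ^ 2) ^ 2 = d ^ 2 - r ^ 2 := Real.sq_sqrt (by nlinarith)
  have hsq := pow_le_pow_left₀ (by positivity) h 2
  rw [mul_pow, hs] at hsq
  rw [div_mul_eq_mul_div, le_div_iff₀ (by positivity)]
  refine le_of_pow_le_pow_left₀ two_ne_zero (by positivity) ?_
  rw [mul_pow, Real.sq_sqrt (by positivity)]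
  nlinarith

theorem one_le_half_add_div_sqrt {ε : ℝ} (hε : 0 < ε) : 1 ≤ (1 / 2 + ε) / √(2 * ε) := by
  rw [one_le_div₀ (by positivity), Real.sqrt_le_left (by positivity)]
  nlinarith [sq_nonneg (ε - 1 / 2)]

theorem drl_tolerates_breakdown_general {H : Type*} [NormedAddCommGroup H] [InnerProductSpace ℝ H]
    {k : ℕ} (hk : 0 < k) (θ : Fin k → H) (θstar : H) (r : ℝ) (hr : 0 ≤ r)
    (ε : ℝ) (hε : ε ∈ Set.Ioo (0 : ℝ) (1 / 2))
    (J : Finset (Fin k)) (hJcard : (1 / 2 + ε) * k ≤ J.card)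
    (hJ : ∀ j ∈ J, ‖θ j - θstar‖ ≤ r)
    (θtilde : H) (hmed : IsGeomMedian θ θtilde) :
    ‖θtilde - θstar‖ ≤ (1 / 2 + ε) / Real.sqrt (2 * ε) * r := by
  rcases le_or_gt ‖θtilde - θstar‖ r with hdr | hrd
  · exact hdr.trans (le_mul_of_one_le_left hr (one_le_half_add_div_sqrt hε.1))
  refine le_div_sqrt_mul_of_mul_sqrt_sq_sub_sq_le hε.1 hr hrd.le ?_
  have hcore := hmed.card_mul_sqrt_sq_sub_sq_le hJ hrd
  have hcompl : (Jᶜ.card : ℝ) = k - J.card := by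
    rw [eq_sub_iff_add_eq, ← Nat.cast_add, Finset.card_compl_add_card, Fintype.card_fin]
  have hk' : (0 : ℝ) < k := Nat.cast_pos.mpr hk
  refine le_of_mul_le_mul_left ?_ hk'
  nlinarith [mul_le_mul_of_nonneg_right hJcard (Real.sqrt_nonneg (‖θtilde - θstar‖ ^ 2 - r ^ 2)),
    mul_le_mul_of_nonneg_right hJcard (norm_nonneg (θtilde - θstar))]

/-- **Tolerance of DRL to machine breakdown.** If at least `(1/2 + ε) k` of the points
`θ 1, …, θ k` lie within distance `r` of `θ*` (the rest being arbitrary, e.g. outputs of broken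
machines), then every geometric median of the points lies within distance
`C_{1/2 - ε} · r = ((1/2 + ε)/√(2ε)) · r` of `θ*`. -/
theorem drl_tolerates_breakdown {H : Type*} [NormedAddCommGroup H] [InnerProductSpace ℝ H]
    [CompleteSpace H] {k : ℕ} (hk : 0 < k) (θ : Fin k → H) (θstar : H) (r : ℝ) (hr : 0 ≤ r)
    (ε : ℝ) (hε : ε ∈ Set.Ioo (0 : ℝ) (1 / 2))
    (J : Finset (Fin k)) (hJcard : (1 / 2 + ε) * k ≤ J.card)
    (hJ : ∀ j ∈ J, ‖θ j - θstar‖ ≤ r)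
    (θtilde : H) (hmed : IsGeomMedian θ θtilde) :
    ‖θtilde - θstar‖ ≤ (1 / 2 + ε) / Real.sqrt (2 * ε) * r :=
  drl_tolerates_breakdown_general hk θ θstar r hr ε hε J hJcard hJ θtilde hmed
end
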